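/- Let θ̄ ∈ ℝ^{p−1} be a global minimizer of F and let v be a coordinate such that |Σ_{t∈T} w_t (∇γ(θ̄; x^t))_v| < λ (strict inequality), where ∇γ(θ; x) = (x_u − tanh(⟨θ, x_{\u}⟩)) · x_{\u}. Then every global minimizer θ̃ of F satisfies θ̃_v = 0. -/

import Mathlib

/-! The loss `L(θ) = -Σ_t w_t γ(θ; x^t)` is convex with gradient `-s(θ)`, where `s = wscore`:
its tangent inequality reduces to `tanh a · (b - a) ≤ log cosh b - log cosh a`, which is
`exp (t x) ≤ cosh x + t sinh x` for `t = tanh a`. At the minimizer `θ̄` of `L + λ‖·‖₁`, moving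
one coordinate at a time gives the KKT conditions `|s_j| ≤ λ` and `s_j θ̄_j = λ |θ̄_j|`
for `s = s(θ̄)`. For another minimizer `θ̃`, convexity of `L` then gives
`Σ_j (λ |θ̃_j| - s_j θ̃_j) ≤ Σ_j (λ |θ̄_j| - s_j θ̄_j) = 0`. Every summand is nonnegative, so each
vanishes, and at a coordinate with `|s_v| < λ` this forces `θ̃_v = 0`. -/

/-- The logistic pseudo-log-likelihood
`γ(θ; x) = x_u ⟨θ, x_{\u}⟩ - log(exp⟨θ, x_{\u}⟩ + exp(-⟨θ, x_{\u}⟩))`. -/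
noncomputable def gammaLL {p : ℕ} (u : Fin p) (x : Fin p → ℝ)
    (θ : {v : Fin p // v ≠ u} → ℝ) : ℝ :=
  x u * (∑ v, θ v * x v.1) -
    Real.log (Real.exp (∑ v, θ v * x v.1) + Real.exp (-(∑ v, θ v * x v.1)))

/-- The penalized objective `F(θ) = -Σ_t w_t γ(θ; x^t) + λ ‖θ‖₁`. -/
noncomputable def objF {p : ℕ} (u : Fin p) {ι : Type} [Fintype ι]
    (x : ι → Fin p → ℝ) (w : ι → ℝ) (lam : ℝ)
    (θ : {v : Fin p // v ≠ u} → ℝ) : ℝ :=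
  -∑ t, w t * gammaLL u (x t) θ + lam * ∑ v, |θ v|

/-- `v`-th coordinate of the weighted score `Σ_t w_t (∇γ(θ; x^t))_v`,
where `(∇γ(θ; x))_v = x_v (x_u - tanh⟨θ, x_{\u}⟩)`. -/
noncomputable def wscore {p : ℕ} (u : Fin p) {ι : Type} [Fintype ι]
    (x : ι → Fin p → ℝ) (w : ι → ℝ)
    (θ : {v : Fin p // v ≠ u} → ℝ) (v : {v : Fin p // v ≠ u}) : ℝ :=
  ∑ t, w t * (x t v.1 * (x t u - Real.tanh (∑ v', θ v' * x t v'.1)))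

open Real Filter Topology

namespace Real

lemma log_exp_add_exp_neg (z : ℝ) : log (exp z + exp (-z)) = log 2 + log (cosh z) := by
  rw [← log_mul two_ne_zero (cosh_pos z).ne', cosh_eq]
  ring_nf

lemma hasDerivAt_log_cosh (y : ℝ) : HasDerivAt (fun z => log (cosh z)) (tanh y) y := by
  simpa [← tanh_eq_sinh_div_cosh] using (hasDerivAt_cosh y).log (cosh_pos y).ne'

lemma tanh_mul_sub_le_log_cosh_sub (a b : ℝ) :
    tanh a * (b - a) ≤ log (cosh b) - log (cosh a) := by
  have key : exp (tanh a * (b - a)) * cosh a ≤ cosh b := by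
    calc exp (tanh a * (b - a)) * cosh a
        ≤ (cosh (b - a) + tanh a * sinh (b - a)) * cosh a := by
          gcongr
          exact exp_mul_le_cosh_add_mul_sinh (abs_tanh_lt_one a).le _
      _ = cosh (a + (b - a)) := by
          rw [tanh_eq_sinh_div_cosh, cosh_add]
          field_simp [(cosh_pos a).ne']
      _ = cosh b := by ring_nf
  rw [← log_div (cosh_pos b).ne' (cosh_pos a).ne', le_log_iff_exp_le (by positivity),
    le_div_iff₀ (cosh_pos a)]
  exact key

end Real

lemma HasDerivAt.le_of_eventually_mul_le_sub {ψ : ℝ → ℝ} {d a : ℝ} (hψ : HasDerivAt ψ d 0)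
    (h : ∀ᶠ t in 𝓝[>] 0, a * t ≤ ψ t - ψ 0) : a ≤ d := by
  refine ge_of_tendsto hψ.tendsto_slope_zero_right ?_
  filter_upwards [h, self_mem_nhdsWithin] with t ht (ht0 : 0 < t)
  rw [zero_add, smul_eq_mul, ← div_eq_inv_mul, le_div_iff₀ ht0]
  linarith

lemma abs_le_and_mul_eq_of_forall_add_abs_le {ψ : ℝ → ℝ} {s c lam : ℝ} (hlam : 0 ≤ lam)
    (hψ : HasDerivAt ψ (-s) 0) (hmin : ∀ h, ψ 0 + lam * |c| ≤ ψ h + lam * |c + h|) :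
    |s| ≤ lam ∧ s * c = lam * |c| := by
  have hdir (e : ℝ) : HasDerivAt (fun t => ψ (t * e)) (-s * e) 0 := by
    have hψ' : HasDerivAt ψ (-s) (0 * e) := by rwa [zero_mul]
    have := hψ'.comp (0 : ℝ) ((hasDerivAt_id' (0 : ℝ)).mul_const e)
    rwa [one_mul] at this
  have hsign (e : ℝ) (he : |e| = 1) : -lam ≤ -s * e := by
    refine (hdir e).le_of_eventually_mul_le_sub ?_
    filter_upwards [self_mem_nhdsWithin] with t (ht : 0 < t)
    have h1 := hmin (t * e)
    have h2 : lam * |c + t * e| ≤ lam * (|c| + t) := by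
      gcongr
      calc |c + t * e| ≤ |c| + |t * e| := abs_add_le _ _
        _ = |c| + t := by rw [abs_mul, he, mul_one, abs_of_pos ht]
    simp only [zero_mul]
    linarith
  have hle : |s| ≤ lam :=
    abs_le.2 ⟨by simpa using hsign (-1) (by simp), by simpa using hsign 1 (by simp)⟩
  -- Moving `c` towards `0` shrinks `|c + h|` linearly, forcing `s * c ≥ lam * |c|`.
  have hmul : lam * |c| ≤ s * c := by
    have := (hdir (-c)).le_of_eventually_mul_le_sub (a := lam * |c|) <| by
      filter_upwards [Ioo_mem_nhdsGT one_pos] with t ⟨ht0, ht1⟩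
      have h1 := hmin (t * -c)
      have h2 : |c + t * -c| = (1 - t) * |c| := by
        rw [show c + t * -c = (1 - t) * c by ring, abs_mul, abs_of_pos (by linarith)]
      simp only [zero_mul, h2] at h1 ⊢
      linarith
    linarith
  refine ⟨hle, le_antisymm ?_ hmul⟩
  calc s * c ≤ |s| * |c| := by rw [← abs_mul]; exact le_abs_self _
    _ ≤ lam * |c| := by gcongr

section Lasso

variable {α : Type*} [Fintype α]

lemma Finset.sum_apply_add_single [DecidableEq α] (g : α → ℝ → ℝ) (θ : α → ℝ) (j : α)
    (h : ℝ) :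
    ∑ i, g i (θ i + (Pi.single j h : α → ℝ) i)
      = ∑ i, g i (θ i) + (g j (θ j + h) - g j (θ j)) := by
  rw [← sub_eq_iff_eq_add', ← Finset.sum_sub_distrib,
    Finset.sum_eq_single j (fun i _ hij => by simp [hij]) (by simp)]
  simp

lemma abs_le_and_mul_eq_of_forall_add_sum_abs_le [DecidableEq α] {L : (α → ℝ) → ℝ} {s θ : α → ℝ}
    {lam : ℝ} (hlam : 0 ≤ lam) (hL : ∀ j, HasDerivAt (fun h => L (θ + Pi.single j h)) (-s j) 0)
    (hmin : ∀ θ', L θ + lam * ∑ i, |θ i| ≤ L θ' + lam * ∑ i, |θ' i|) (j : α) :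
    |s j| ≤ lam ∧ s j * θ j = lam * |θ j| := by
  refine abs_le_and_mul_eq_of_forall_add_abs_le hlam (hL j) fun h => ?_
  have := hmin (θ + Pi.single j h)
  simp only [Pi.add_apply, Finset.sum_apply_add_single (fun _ => abs), Pi.single_zero,
    add_zero] at this ⊢
  linarith

lemma eq_zero_of_abs_lt_of_add_sum_abs_le {L : (α → ℝ) → ℝ} {s θ θ' : α → ℝ} {lam : ℝ}
    (htangent : L θ - ∑ j, s j * (θ' j - θ j) ≤ L θ')
    (hkkt : ∀ j, |s j| ≤ lam ∧ s j * θ j = lam * |θ j|)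
    (hθ' : L θ' + lam * ∑ j, |θ' j| ≤ L θ + lam * ∑ j, |θ j|) {v : α} (hv : |s v| < lam) :
    θ' v = 0 := by
  have hgap (j : α) : s j * θ' j ≤ |s j| * |θ' j| := by rw [← abs_mul]; exact le_abs_self _
  have hterm_nonneg (j : α) : 0 ≤ lam * |θ' j| - s j * θ' j := by
    nlinarith [hgap j, mul_le_mul_of_nonneg_right (hkkt j).1 (abs_nonneg (θ' j))]
  have hsum : ∑ j, (lam * |θ' j| - s j * θ' j) = 0 := by
    refine le_antisymm ?_ (Finset.sum_nonneg fun j _ => hterm_nonneg j)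
    have hθ : ∑ j, s j * θ j = lam * ∑ j, |θ j| := by
      rw [Finset.mul_sum]; exact Finset.sum_congr rfl fun j _ => (hkkt j).2
    simp only [mul_sub, Finset.sum_sub_distrib, ← Finset.mul_sum] at htangent ⊢
    linarith
  have hv0 := (Finset.sum_eq_zero_iff_of_nonneg fun j _ => hterm_nonneg j).1 hsum v
    (Finset.mem_univ v)
  by_contra hne
  have := mul_lt_mul_of_pos_right hv (abs_pos.2 hne)
  linarith [hgap v]

end Lasso

section Logistic

variable {p : ℕ} (u : Fin p) {ι : Type} [Fintype ι] (x : ι → Fin p → ℝ) (w : ι → ℝ)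

noncomputable def logisticLoss (θ : {v : Fin p // v ≠ u} → ℝ) : ℝ :=
  -∑ t, w t * gammaLL u (x t) θ

lemma gammaLL_eq_log_cosh (y : Fin p → ℝ) (θ : {v : Fin p // v ≠ u} → ℝ) :
    gammaLL u y θ = y u * (∑ v, θ v * y v.1) - (log 2 + log (cosh (∑ v, θ v * y v.1))) := by
  rw [gammaLL, log_exp_add_exp_neg]

lemma logisticLoss_sub_sum_wscore_mul_le (hw : ∀ t, 0 ≤ w t)
    (θ₀ θ : {v : Fin p // v ≠ u} → ℝ) :
    logisticLoss u x w θ₀ - ∑ j, wscore u x w θ₀ j * (θ j - θ₀ j) ≤ logisticLoss u x w θ := by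
  set a : ι → ℝ := fun t => ∑ v, θ₀ v * x t v.1
  set b : ι → ℝ := fun t => ∑ v, θ v * x t v.1
  have hpair : ∑ j, wscore u x w θ₀ j * (θ j - θ₀ j)
      = ∑ t, w t * ((x t u - tanh (a t)) * (b t - a t)) := by
    simp only [a, b, wscore, Finset.sum_mul, Finset.mul_sum, ← Finset.sum_sub_distrib]
    rw [Finset.sum_comm]
    exact Finset.sum_congr rfl fun t _ => Finset.sum_congr rfl fun j _ => by ring
  rw [hpair, logisticLoss, logisticLoss, sub_le_iff_le_add, ← Finset.sum_neg_distrib,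
    ← Finset.sum_neg_distrib, ← Finset.sum_add_distrib]
  refine Finset.sum_le_sum fun t _ => ?_
  have := mul_le_mul_of_nonneg_left (tanh_mul_sub_le_log_cosh_sub (a t) (b t)) (hw t)
  simp only [gammaLL_eq_log_cosh]
  linarith

lemma hasDerivAt_logisticLoss_add_single (θ : {v : Fin p // v ≠ u} → ℝ)
    (j : {v : Fin p // v ≠ u}) :
    HasDerivAt (fun h => logisticLoss u x w (θ + Pi.single j h)) (-wscore u x w θ j) 0 := by
  have hinner (t : ι) (h : ℝ) :
      ∑ v, (θ + Pi.single j h : {v : Fin p // v ≠ u} → ℝ) v * x t v.1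
        = ∑ v, θ v * x t v.1 + h * x t j.1 := by
    have := Finset.sum_apply_add_single (fun (v : {v : Fin p // v ≠ u}) y => y * x t v.1) θ j h
    simp only [Pi.add_apply] at this ⊢
    rw [this]
    ring
  simp only [logisticLoss, gammaLL_eq_log_cosh, hinner, wscore, ← Finset.sum_neg_distrib]
  refine HasDerivAt.fun_sum fun t _ => ?_
  set A := ∑ v, θ v * x t v.1
  set B := x t j.1
  have hline : HasDerivAt (fun h : ℝ => A + h * B) B 0 := by
    simpa using ((hasDerivAt_id' (0 : ℝ)).mul_const B).const_add A
  have hcosh := (hasDerivAt_log_cosh (A + 0 * B)).comp (0 : ℝ) hline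
  convert (((hline.const_mul (x t u)).sub (hcosh.const_add (log 2))).const_mul (w t)).neg using 1
  · ext h
    simp only [Function.comp_apply, Pi.neg_apply, Pi.sub_apply]
  · simp only [zero_mul, add_zero]
    ring

end Logistic

theorem strict_dual_feasibility_zero_general
    (p : ℕ) (u : Fin p) (ι : Type) [Fintype ι]
    (x : ι → Fin p → ℝ)
    (w : ι → ℝ) (hw : ∀ t, 0 < w t)
    (lam : ℝ) (hlam : 0 < lam)
    (θbar : {v : Fin p // v ≠ u} → ℝ)
    (hbar : ∀ θ', objF u x w lam θbar ≤ objF u x w lam θ')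
    (v : {v : Fin p // v ≠ u})
    (hv : |wscore u x w θbar v| < lam) :
    ∀ θtilde : {v : Fin p // v ≠ u} → ℝ,
      (∀ θ', objF u x w lam θtilde ≤ objF u x w lam θ') → θtilde v = 0 := by
  intro θtilde htilde
  have hkkt := abs_le_and_mul_eq_of_forall_add_sum_abs_le hlam.le
    (hasDerivAt_logisticLoss_add_single u x w θbar) hbar
  have htangent := logisticLoss_sub_sum_wscore_mul_le u x w (fun t => (hw t).le) θbar θtilde
  exact eq_zero_of_abs_lt_of_add_sum_abs_le htangent hkkt (htilde θbar) hv

/-- If `θ̄` is a global minimizer of `F` and at coordinate `v` the dual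
variable is strictly feasible, `|Σ_t w_t (∇γ(θ̄; x^t))_v| < λ`, then every global
minimizer `θ̃` of `F` satisfies `θ̃_v = 0`. -/
theorem strict_dual_feasibility_zero
    (p : ℕ) (hp : 2 ≤ p) (u : Fin p) (ι : Type) [Fintype ι]
    (x : ι → Fin p → ℝ) (hx : ∀ t i, x t i = 1 ∨ x t i = -1)
    (w : ι → ℝ) (hw : ∀ t, 0 < w t) (hw1 : ∑ t, w t = 1)
    (lam : ℝ) (hlam : 0 < lam)
    (θbar : {v : Fin p // v ≠ u} → ℝ)
    (hbar : ∀ θ', objF u x w lam θbar ≤ objF u x w lam θ')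
    (v : {v : Fin p // v ≠ u})
    (hv : |wscore u x w θbar v| < lam) :
    ∀ θtilde : {v : Fin p // v ≠ u} → ℝ,
      (∀ θ', objF u x w lam θtilde ≤ objF u x w lam θ') → θtilde v = 0 :=
  strict_dual_feasibility_zero_general p u ι x w hw lam hlam θbar hbar v hv
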